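/- Let M be an invertible n×n real matrix and let M' be obtained from M by replacing its first column. If the determinants of M and M' have opposite signs, then M' is invertible, and for every Z in the image of the positive orthant under M that also lies in the image of the positive orthant under M', we reach a contradiction: the images M((0,∞)ⁿ) and M'((0,∞)ⁿ) are disjoint. -/
import Mathlib

/-- If `M` is invertible and `M'` is obtained from `M` by replacing its first column,
and the determinants of `M` and `M'` have opposite signs, then `M'` is invertible and
the images of the open positive orthant `(0,∞)ⁿ` under `M` and under `M'` are
disjoint. -/
theorem positive_orthant_images_disjoint
    (n : ℕ) (M M' : Matrix (Fin (n + 1)) (Fin (n + 1)) ℝ)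
    (hcol : ∀ i j, j ≠ 0 → M i j = M' i j)
    (hM : IsUnit M.det)
    (hsign : M.det * M'.det < 0) :
    IsUnit M'.det ∧
      Disjoint (M.mulVec '' {x | ∀ i, 0 < x i})
        (M'.mulVec '' {x | ∀ i, 0 < x i}) := by
  have hM' : M'.det ≠ 0 := by
    intro h; rw [h, mul_zero] at hsign; exact lt_irrefl 0 hsign
  refine ⟨isUnit_iff_ne_zero.mpr hM', ?_⟩
  rw [Set.disjoint_left]
  rintro z ⟨x, hx, rfl⟩ ⟨y, hy, hzy⟩
  -- key: cramer A (A *ᵥ v) = A.det • v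
  have key : ∀ (A : Matrix (Fin (n + 1)) (Fin (n + 1)) ℝ) (v : Fin (n + 1) → ℝ),
      Matrix.cramer A (A.mulVec v) = A.det • v := by
    intro A v
    rw [Matrix.cramer_eq_adjugate_mulVec, Matrix.mulVec_mulVec,
      Matrix.adjugate_mul, Matrix.smul_mulVec, Matrix.one_mulVec]
  have hupd : M.updateCol 0 (M.mulVec x) = M'.updateCol 0 (M.mulVec x) := by
    ext i j
    by_cases hj : j = 0
    · simp [hj]
    · simp [Matrix.updateCol_apply, hj, hcol i j hj]
  have h1 : M.det * x 0 = M'.det * y 0 := by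
    have e1 := congrFun (key M x) 0
    have e2 := congrFun (key M' y) 0
    rw [Matrix.cramer_apply] at e1 e2
    rw [hupd] at e1
    rw [hzy] at e2
    rw [e2] at e1
    simp only [Pi.smul_apply, smul_eq_mul] at e1 e2
    simpa using e1.symm
  have hx0 := hx 0
  have hy0 := hy 0
  have h2 : M'.det * (M.det * x 0) = M'.det * (M'.det * y 0) := by rw [h1]
  nlinarith [mul_neg_of_neg_of_pos hsign hx0, mul_pos (mul_self_pos.mpr hM') hy0]
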